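/- Let σ be a word with des(σ) = r, π = π₁⋯π_n a word with des(π) = s, σ and π disjoint, and α a shuffle of σ and π with des(α) = k. For 0 ≤ i ≤ n let α^{(i)} be the word obtained from α by deleting π₁, …, π_i, and set t(i) = maj(α^{(i−1)}) − maj(α^{(i)}) − d_i(π). If j₁ is the least index in {1,…,n} with des(α^{(j₁−1)}) = des(α^{(j₁)}), then t(j₁) ≤ k − s. -/

import Mathlib

open Polynomial List

/-- The set of (1-indexed) descents of a word `w`: indices `i` with
`1 ≤ i ≤ length w - 1` and `w_i > w_{i+1}`. -/
def descents (w : List ℕ) : Finset ℕ :=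
  (Finset.Ico 1 w.length).filter (fun i => w.getD i 0 < w.getD (i - 1) 0)

/-- The number of descents of a word. -/
def des (w : List ℕ) : ℕ := (descents w).card

/-- The major index of a word: the sum of its descents. -/
def maj (w : List ℕ) : ℕ := ∑ i ∈ descents w, i

/-- `dge i w` is the number of descents of `w` that are `≥ i`. -/
def dge (i : ℕ) (w : List ℕ) : ℕ := ((descents w).filter (fun j => i ≤ j)).card

/-- `α` is a shuffle of the disjoint words `σ` and `π`. -/
def IsShuffle (σ π α : List ℕ) : Prop :=
  α.length = σ.length + π.length ∧ σ.Sublist α ∧ π.Sublist α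

/-- `ins σ i r` is `σ^{(i)}(r)`, the word obtained by inserting `r`
immediately before `σ_{i+1}` (after `σ_n` when `i = n`). -/
def ins (σ : List ℕ) (i r : ℕ) : List ℕ := σ.insertIdx i r

/-- The major increment `im(σ,i,r) = maj(σ^{(i)}(r)) - maj(σ)`. -/
def im (σ : List ℕ) (i r : ℕ) : ℤ := (maj (ins σ i r) : ℤ) - (maj σ : ℤ)

/-- The space `i` (for `0 ≤ i ≤ n`) is an RL-space of `σ` relative to `r`. -/
def IsRL (σ : List ℕ) (r i : ℕ) : Prop :=
  (i = σ.length ∧ ∀ x ∈ σ.getLast?, x < r) ∨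
  (i = 0 ∧ ∀ x ∈ σ.head?, r < x) ∨
  (0 < i ∧ i < σ.length ∧ r < σ.getD i 0 ∧ σ.getD i 0 < σ.getD (i - 1) 0) ∨
  (0 < i ∧ i < σ.length ∧ σ.getD i 0 < σ.getD (i - 1) 0 ∧ σ.getD (i - 1) 0 < r) ∨
  (0 < i ∧ i < σ.length ∧ σ.getD (i - 1) 0 < r ∧ r < σ.getD i 0)

/-- The Gaussian binomial coefficient `[N choose M]_q`, as a polynomial in `q`:
`∏_{j=1}^{M} (1 - q^{N-M+j}) / ∏_{j=1}^{M} (1 - q^{j})` when `0 ≤ M ≤ N`, and `0` otherwise. -/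
noncomputable def gauss (N M : ℤ) : Polynomial ℚ :=
  if 0 ≤ M ∧ M ≤ N then
    (∏ j ∈ Finset.Icc 1 M.toNat, (1 - (X : Polynomial ℚ) ^ (N - M + j).toNat)) /
      (∏ j ∈ Finset.Icc 1 M.toNat, (1 - (X : Polynomial ℚ) ^ (j : ℕ)))
  else 0

/-- `delPrefix α π i` is `α^{(i)}`: the word obtained from `α` by deleting
the letters `π₁, …, π_i`. -/
def delPrefix (α π : List ℕ) (i : ℕ) : List ℕ :=
  α.filter (fun x => !((π.take i).contains x))

/-!
Deleting one letter from a word lowers `des` by `0` or `1`; when it deletes the letter at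
position `p + 1` without changing `des`, `maj` drops by exactly the number of descents at
positions `> p`, hence by at most `des`. Along `α = α^{(0)}, α^{(1)}, …` the descent number thus
falls by one at each of the first `j₁ - 1` steps, so `des α^{(j₁-1)} = k - (j₁ - 1)` bounds
`maj α^{(j₁-1)} - maj α^{(j₁)}`, while `d_{j₁}(π) ≥ s - (j₁ - 1)` because at most `j₁ - 1`
descents lie below `j₁`.
-/

lemma mem_descents {w : List ℕ} {i : ℕ} :
    i ∈ descents w ↔ 1 ≤ i ∧ i < w.length ∧ w.getD i 0 < w.getD (i - 1) 0 := by
  simp [descents, and_assoc]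

@[simp]
lemma descents_nil : descents [] = ∅ := rfl

@[simp]
lemma descents_singleton (a : ℕ) : descents [a] = ∅ := rfl

lemma descents_cons_cons (a b : ℕ) (l : List ℕ) :
    descents (a :: b :: l) =
      (if b < a then {1} else ∅) ∪ (descents (b :: l)).map (addRightEmbedding 1) := by
  ext i
  simp only [Finset.mem_union, Finset.mem_map, addRightEmbedding_apply, mem_descents]
  rcases i with _ | _ | i
  · split_ifs <;> simp
  · split_ifs <;> simp [*]
  · simp only [List.length_cons, List.getD_cons_succ]
    constructor
    · rintro ⟨-, hi, hdesc⟩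
      exact Or.inr ⟨i + 1, ⟨by omega, by simpa using hi, by simpa using hdesc⟩, rfl⟩
    · rintro (h | ⟨j, ⟨-, hj, hdesc⟩, hji⟩)
      · split_ifs at h <;> simp at h
      · obtain rfl : j = i + 1 := by omega
        exact ⟨by omega, by simpa using hj, by simpa using hdesc⟩

def headDescent (a : ℕ) : List ℕ → ℕ
  | [] => 0
  | b :: _ => if b < a then 1 else 0

lemma headDescent_le_one (a : ℕ) (l : List ℕ) : headDescent a l ≤ 1 := by
  unfold headDescent
  split
  · exact zero_le_one
  · split_ifs <;> simp

lemma headDescent_eraseIdx_succ (a q : ℕ) (l : List ℕ) :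
    headDescent a (l.eraseIdx (q + 1)) = headDescent a l := by
  cases l <;> rfl

lemma des_cons (a : ℕ) (l : List ℕ) : des (a :: l) = des l + headDescent a l := by
  rcases l with _ | ⟨b, l⟩
  · simp [des, headDescent]
  · rw [des, descents_cons_cons, Finset.card_union_of_disjoint, Finset.card_map, des,
      headDescent]
    · split_ifs <;> simp [add_comm]
    · split_ifs
      · simp [mem_descents]
      · simp

lemma maj_cons (a : ℕ) (l : List ℕ) : maj (a :: l) = maj l + des l + headDescent a l := by
  rcases l with _ | ⟨b, l⟩
  · simp [maj, des, headDescent]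
  · rw [maj, descents_cons_cons, Finset.sum_union, Finset.sum_map, maj, des, headDescent]
    · simp only [addRightEmbedding_apply, Finset.sum_add_distrib, Finset.sum_const,
        smul_eq_mul, mul_one]
      split_ifs <;> simp [add_comm]
    · split_ifs
      · simp [mem_descents]
      · simp

lemma dge_one (w : List ℕ) : dge 1 w = des w := by
  rw [dge, des, Finset.filter_true_of_mem fun j hj => (mem_descents.1 hj).1]

lemma dge_cons_succ {i : ℕ} (hi : 1 ≤ i) (a : ℕ) (l : List ℕ) :
    dge (i + 1) (a :: l) = dge i l := by
  rcases l with _ | ⟨b, l⟩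
  · simp [dge]
  · have hhead : ((if b < a then {1} else ∅) : Finset ℕ).filter (i + 1 ≤ ·) = ∅ := by
      split_ifs <;> simp [Finset.filter_singleton]
      omega
    rw [dge, dge, descents_cons_cons, Finset.filter_union, hhead, Finset.empty_union,
      Finset.filter_map, Finset.card_map]
    simp

lemma headDescent_cons_add_headDescent (a b : ℕ) (t : List ℕ) :
    headDescent a (b :: t) + headDescent b t = headDescent a t ∨
      headDescent a (b :: t) + headDescent b t = headDescent a t + 1 := by
  rcases t with _ | ⟨c, t⟩ <;> simp only [headDescent] <;> split_ifs <;> omega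

theorem des_eraseIdx_eq_or (w : List ℕ) (p : ℕ) :
    des (w.eraseIdx p) = des w ∨ des (w.eraseIdx p) + 1 = des w := by
  induction w generalizing p with
  | nil => simp
  | cons a l ih =>
    rcases p with _ | q
    · have := headDescent_le_one a l
      rw [List.eraseIdx_cons_zero, des_cons]
      omega
    rw [List.eraseIdx_cons_succ, des_cons, des_cons]
    rcases q with _ | q
    · rcases l with _ | ⟨b, t⟩
      · simp
      · have := headDescent_cons_add_headDescent a b t
        rw [List.eraseIdx_cons_zero, des_cons]
        omega
    · have := ih (q + 1)
      rw [headDescent_eraseIdx_succ]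
      omega

theorem maj_sub_maj_eraseIdx (w : List ℕ) (p : ℕ) :
    (maj w : ℤ) - maj (w.eraseIdx p) =
      p * ((des w : ℤ) - des (w.eraseIdx p)) + dge (p + 1) w := by
  induction w generalizing p with
  | nil => simp [maj, dge]
  | cons a l ih =>
    rcases p with _ | q
    · rw [List.eraseIdx_cons_zero, maj_cons, dge_one, des_cons]
      push_cast
      ring
    have hhead : (q : ℤ) * headDescent a (l.eraseIdx q) = q * headDescent a l := by
      rcases q with _ | q
      · simp
      · rw [headDescent_eraseIdx_succ]
    rw [List.eraseIdx_cons_succ, maj_cons, maj_cons, des_cons, des_cons,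
      dge_cons_succ (by omega)]
    push_cast
    linear_combination ih q + hhead

lemma dge_le_des (i : ℕ) (w : List ℕ) : dge i w ≤ des w :=
  Finset.card_filter_le _ _

lemma des_le_dge_add (i : ℕ) (w : List ℕ) : des w ≤ dge i w + (i - 1) := by
  have hlow : (descents w).filter (fun j => ¬ i ≤ j) ⊆ Finset.Ico 1 i := fun j hj => by
    rw [Finset.mem_filter, mem_descents] at hj
    rw [Finset.mem_Ico]
    omega
  have := Finset.card_le_card hlow
  rw [Nat.card_Ico] at this
  have := Finset.card_filter_add_card_filter_not (s := descents w) (p := fun j => i ≤ j)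
  rw [des, dge]
  omega

lemma IsShuffle.nodup {σ π α : List ℕ} (h : IsShuffle σ π α) (hσ : σ.Nodup) (hπ : π.Nodup)
    (hdisj : σ.Disjoint π) : α.Nodup := by
  obtain ⟨hlen, hσα, hπα⟩ := h
  have hnd : (σ ++ π).Nodup := hσ.append hπ hdisj
  have hperm : (σ ++ π).Perm α :=
    (List.subperm_of_subset hnd (List.append_subset.2 ⟨hσα.subset, hπα.subset⟩)).perm_of_length_le
      (by simp [hlen])
  exact hperm.nodup_iff.1 hnd

lemma delPrefix_succ {α : List ℕ} (hα : α.Nodup) (π : List ℕ) {j : ℕ} (hj : j < π.length) :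
    delPrefix α π (j + 1) = (delPrefix α π j).erase π[j] := by
  have hnd : (delPrefix α π j).Nodup := hα.filter _
  rw [hnd.erase_eq_filter, delPrefix, delPrefix, List.filter_filter]
  congr 1
  ext x
  rw [List.take_add_one, List.getElem?_eq_getElem hj]
  grind

lemma des_delPrefix_succ_eq_or {α : List ℕ} (hα : α.Nodup) (π : List ℕ) {j : ℕ}
    (hj : j < π.length) :
    des (delPrefix α π (j + 1)) = des (delPrefix α π j) ∨
      des (delPrefix α π (j + 1)) + 1 = des (delPrefix α π j) := by
  rw [delPrefix_succ hα π hj, ← List.eraseIdx_idxOf_eq_erase]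
  exact des_eraseIdx_eq_or _ _

theorem des_delPrefix_add {α π : List ℕ} (hα : α.Nodup) {j : ℕ} (hj : j ≤ π.length)
    (hdrop : ∀ i < j, des (delPrefix α π (i + 1)) ≠ des (delPrefix α π i)) :
    des (delPrefix α π j) + j = des α := by
  induction j with
  | zero => simp [delPrefix]
  | succ j ih =>
    have := des_delPrefix_succ_eq_or hα π (show j < π.length by omega)
    have := hdrop j (by omega)
    have := ih (by omega) fun i hi => hdrop i (by omega)
    omega

theorem maj_sub_maj_delPrefix_succ_le {α : List ℕ} (hα : α.Nodup) (π : List ℕ) {j : ℕ}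
    (hj : j < π.length) (hkeep : des (delPrefix α π j) = des (delPrefix α π (j + 1))) :
    (maj (delPrefix α π j) : ℤ) - maj (delPrefix α π (j + 1)) ≤ des (delPrefix α π j) := by
  rw [delPrefix_succ hα π hj, ← List.eraseIdx_idxOf_eq_erase] at hkeep ⊢
  rw [maj_sub_maj_eraseIdx, ← hkeep, sub_self, mul_zero, zero_add, Nat.cast_le]
  exact dge_le_des _ _

theorem t_first_keep_le_general (n s k : ℕ) (σ π α : List ℕ)
    (hπl : π.length = n) (hσnd : σ.Nodup) (hπnd : π.Nodup)
    (hdisj : σ.Disjoint π) (hs : des π = s)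
    (hα : IsShuffle σ π α) (hk : des α = k)
    (t : ℕ → ℤ)
    (ht : ∀ i, t i = (maj (delPrefix α π (i - 1)) : ℤ) - (maj (delPrefix α π i) : ℤ)
      - (dge i π : ℤ))
    (j₁ : ℕ) (hj1 : 1 ≤ j₁) (hj1n : j₁ ≤ n)
    (hkeep : des (delPrefix α π (j₁ - 1)) = des (delPrefix α π j₁))
    (hleast : ∀ j, 1 ≤ j → j < j₁ →
      des (delPrefix α π (j - 1)) ≠ des (delPrefix α π j)) :
    t j₁ ≤ (k : ℤ) - s := by
  obtain ⟨j, rfl⟩ : ∃ j, j₁ = j + 1 := ⟨j₁ - 1, by omega⟩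
  rw [Nat.add_sub_cancel] at hkeep
  have hαnd := hα.nodup hσnd hπnd hdisj
  have hdes : des (delPrefix α π j) + j = k := hk ▸ des_delPrefix_add hαnd (by omega)
    fun i hi => (hleast (i + 1) (by omega) (by omega)).symm
  have hmaj := maj_sub_maj_delPrefix_succ_le hαnd π (by omega) hkeep
  have hπ := des_le_dge_add (j + 1) π
  rw [ht, Nat.add_sub_cancel]
  omega

/-- If `j₁` is the least index at which deleting `π_{j₁}` keeps the descent number,
then `t(j₁) ≤ k - s`. -/
theorem t_first_keep_le (m n r s k : ℕ) (σ π α : List ℕ)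
    (hσl : σ.length = m) (hπl : π.length = n) (hσnd : σ.Nodup) (hπnd : π.Nodup)
    (hdisj : σ.Disjoint π) (hr : des σ = r) (hs : des π = s)
    (hα : IsShuffle σ π α) (hk : des α = k)
    (t : ℕ → ℤ)
    (ht : ∀ i, t i = (maj (delPrefix α π (i - 1)) : ℤ) - (maj (delPrefix α π i) : ℤ)
      - (dge i π : ℤ))
    (j₁ : ℕ) (hj1 : 1 ≤ j₁) (hj1n : j₁ ≤ n)
    (hkeep : des (delPrefix α π (j₁ - 1)) = des (delPrefix α π j₁))
    (hleast : ∀ j, 1 ≤ j → j < j₁ →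
      des (delPrefix α π (j - 1)) ≠ des (delPrefix α π j)) :
    t j₁ ≤ (k : ℤ) - s :=
  t_first_keep_le_general n s k σ π α hπl hσnd hπnd hdisj hs hα hk t ht j₁ hj1 hj1n hkeep hleast
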